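/- arXiv:2207.05258 — 6 statements merged into one kernel-verified Lean document; each statement's English description precedes it below -/
import Mathlib

section
/- Let Δx > 0 and let p be the unique quadratic polynomial satisfying (1/Δx)∫_{x_{i-1}-Δx/2}^{x_{i-1}+Δx/2} p = f_{i-1}, (1/Δx)∫_{x_i-Δx/2}^{x_i+Δx/2} p = f_i, and (1/Δx)∫_{x_i-Δx/2}^{x_i+Δx/2} p' = h_i, where x_{i-1} = x_i - Δx. Then p(x_i + Δx/2) = (1/6) f_{i-1} + (5/6) f_i + (2/3) Δx h_i. -/
/-!
Simpson's rule turns both cell averages of `p` into point values, and the fundamental theorem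
of calculus turns the derivative average into `(p(x_{i+1/2}) - p(x_{i-1/2})) / Δx`. Writing the
quadratic `p` through its three coefficients, the claim becomes a polynomial identity.
-/

open intervalIntegral

namespace Polynomial

theorem eval_eq_of_natDegree_le_two {R : Type*} [Semiring R] {p : R[X]} (hp : p.natDegree ≤ 2)
    (x : R) : p.eval x = p.coeff 0 + p.coeff 1 * x + p.coeff 2 * x ^ 2 := by
  rw [eval_eq_sum_range' (Nat.lt_succ_of_le hp)]
  simp [Finset.sum_range_succ]

theorem integral_eval_eq_sum_range {p : ℝ[X]} {n : ℕ} (hn : p.natDegree < n) (a b : ℝ) :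
    ∫ x in a..b, p.eval x =
      ∑ k ∈ Finset.range n, p.coeff k * ((b ^ (k + 1) - a ^ (k + 1)) / (k + 1)) := by
  simp_rw [eval_eq_sum_range' hn]
  rw [integral_finsetSum fun k _ =>
    ((continuous_pow k).const_mul (p.coeff k)).intervalIntegrable a b]
  simp only [integral_const_mul, integral_pow]

theorem integral_eval_eq_simpson {p : ℝ[X]} (hp : p.natDegree ≤ 3) (a b : ℝ) :
    ∫ x in a..b, p.eval x = (b - a) / 6 * (p.eval a + 4 * p.eval ((a + b) / 2) + p.eval b) := by
  have hn : p.natDegree < 4 := Nat.lt_succ_of_le hp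
  rw [integral_eval_eq_sum_range hn]
  simp only [eval_eq_sum_range' hn, Finset.sum_range_succ, Finset.sum_range_zero]
  push_cast
  ring

end Polynomial

open Polynomial

theorem stmt_0 (Δx xi fim1 fi hi : ℝ) (hΔ : 0 < Δx)
    (p : Polynomial ℝ) (hdeg : p.natDegree ≤ 2)
    (h1 : (1 / Δx) * ∫ x in ((xi - Δx) - Δx / 2)..((xi - Δx) + Δx / 2), p.eval x = fim1)
    (h2 : (1 / Δx) * ∫ x in (xi - Δx / 2)..(xi + Δx / 2), p.eval x = fi)
    (h3 : (1 / Δx) * ∫ x in (xi - Δx / 2)..(xi + Δx / 2), (Polynomial.derivative p).eval x = hi) :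
    p.eval (xi + Δx / 2) = (1 / 6) * fim1 + (5 / 6) * fi + (2 / 3) * Δx * hi := by
  have hp3 : p.natDegree ≤ 3 := hdeg.trans (by norm_num)
  rw [integral_eval_eq_simpson hp3] at h1 h2
  rw [integral_eq_sub_of_hasDerivAt (fun x _ => p.hasDerivAt x)
    (p.derivative.continuous.intervalIntegrable _ _)] at h3
  simp only [eval_eq_of_natDegree_le_two hdeg] at h1 h2 h3 ⊢
  subst h1 h2 h3
  field_simp [hΔ.ne']
  ring
end

section
/- Let u : ℝ → ℝ be five times continuously differentiable and set u_{i+ℓ} = u(x_i + ℓΔx), v_{i+ℓ} = u'(x_i + ℓΔx) for ℓ ∈ {−1, 1}. Then q'_0(x_i) := (3/(4Δx))(u_{i+1} − u_{i−1}) − (1/4)(v_{i−1} + v_{i+1}) satisfies |q'_0(x_i) − u'(x_i)| = O(Δx^4) as Δx → 0. -/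
/-!
With `g h = u (x + h) - u (x - h)`, which is odd, `4 Δx` times the error is the Hermite defect
`F h = 3 g h - h g' h - 2 h g' 0`. Its derivatives are `F' = 2 g' - h g'' - 2 g' 0`,
`F'' = g'' - h g'''` and `F''' = -h g⁗`. Since the even-order derivatives of an odd function
vanish at `0`, so do `F`, `F'`, `F''`, and `F''' = O(h²)`; three applications of the mean value
inequality give `F = O(h⁵)`.
-/

open Filter Asymptotics Topology

section

variable {E : Type*} [NormedAddCommGroup E] [NormedSpace ℝ E]

theorem Convex.isBigO_pow_succ_real {f f' : ℝ → E} {x₀ : ℝ} {n : ℕ} {s : Set ℝ}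
    (hs : Convex ℝ s) (hx₀s : x₀ ∈ s)
    (hff' : ∀ x ∈ s, HasDerivWithinAt f (f' x) s x)
    (hf' : f' =O[𝓝[s] x₀] fun x ↦ (x - x₀) ^ n) :
    (fun x ↦ f x - f x₀) =O[𝓝[s] x₀] fun x ↦ (x - x₀) ^ (n + 1) := by
  obtain ⟨c, hc, hcf'⟩ := hf'.exists_nonneg
  refine IsBigO.of_bound c ?_
  filter_upwards [self_mem_nhdsWithin, hs.eventually_nhdsWithin_segment hx₀s hcf'.bound]
    with x hxs hbound
  have hseg := hs.segment_subset hx₀s hxs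
  calc ‖f x - f x₀‖ ≤ c * ‖x - x₀‖ ^ n * ‖x - x₀‖ :=
        (convex_segment x₀ x).norm_image_sub_le_of_norm_hasDerivWithin_le
          (fun y hy ↦ (hff' y (hseg hy)).mono hseg)
          (fun y hy ↦ (hbound y hy).trans (by
            rw [norm_pow]; gcongr; exact norm_sub_le_of_mem_segment hy))
          (left_mem_segment ℝ x₀ x) (right_mem_segment ℝ x₀ x)
    _ = c * ‖(x - x₀) ^ (n + 1)‖ := by rw [norm_pow, pow_succ, mul_assoc]

theorem isBigO_pow_succ_of_hasDerivAt {f f' : ℝ → E} {n : ℕ}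
    (hff' : ∀ x, HasDerivAt f (f' x) x) (hf₀ : f 0 = 0) (hf' : f' =O[𝓝 0] (· ^ n)) :
    f =O[𝓝 0] (· ^ (n + 1)) := by
  simpa [hf₀] using convex_univ.isBigO_pow_succ_real (Set.mem_univ 0)
    (fun x _ ↦ (hff' x).hasDerivWithinAt) (by simpa using hf')

theorem Function.Odd.iteratedDeriv_two_mul {g : ℝ → E} (hg : g.Odd) (k : ℕ) :
    (iteratedDeriv (2 * k) g).Odd := by
  intro x
  have h := iteratedDeriv_comp_neg (2 * k) g (-x)
  simp only [hg.eq, iteratedDeriv_fun_neg, neg_neg, pow_mul, neg_one_sq, one_pow, one_smul] at h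
  rw [← h, neg_neg]

theorem Function.Odd.isBigO_hermite_defect {g : ℝ → E} (hodd : g.Odd) (hg : ContDiff ℝ 5 g) :
    (fun h : ℝ ↦ (3 : ℝ) • g h - h • deriv g h - (2 * h) • deriv g 0)
      =O[𝓝 0] (· ^ 5) := by
  set D : ℕ → ℝ → E := fun k ↦ iteratedDeriv k g with hD_def
  have hD : ∀ k < 5, ∀ x, HasDerivAt (D k) (D (k + 1) x) x := fun k hk x ↦ by
    simpa [hD_def, iteratedDeriv_succ] using
      ((hg.differentiable_iteratedDeriv k (by exact_mod_cast hk)) x).hasDerivAt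
  have := IsAddTorsionFree.of_isTorsionFree ℝ E
  have hD_zero : ∀ k, D (2 * k) 0 = 0 := fun k ↦ (hodd.iteratedDeriv_two_mul k).map_zero
  have hsmul :
      ∀ k < 5, ∀ x, HasDerivAt (fun y ↦ y • D k y) (D k x + x • D (k + 1) x) x :=
    fun k hk x ↦ ((hasDerivAt_id x).smul (hD k hk x)).congr_deriv (by simp [add_comm])
  -- `hFk` bounds the `k`-th derivative of the defect.
  have hF3 : (fun h : ℝ ↦ -(h • D 4 h)) =O[𝓝 0] (· ^ 2) := by
    have hD4 : (fun h ↦ D 4 h) =O[𝓝 0] fun h ↦ h := by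
      simpa [hD_zero 2] using (hD 4 (by norm_num) 0).isBigO_sub
    simpa [pow_two] using ((isBigO_refl (fun h : ℝ ↦ h) (𝓝 0)).smul hD4).neg_left
  have hF2 : (fun h : ℝ ↦ D 2 h - h • D 3 h) =O[𝓝 0] (· ^ 3) :=
    isBigO_pow_succ_of_hasDerivAt
      (fun x ↦ ((hD 2 (by norm_num) x).sub (hsmul 3 (by norm_num) x)).congr_deriv (by abel))
      (by simpa using hD_zero 1) hF3
  have hF1 : (fun h : ℝ ↦ (2 : ℝ) • D 1 h - h • D 2 h - (2 : ℝ) • D 1 0)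
      =O[𝓝 0] (· ^ 4) :=
    isBigO_pow_succ_of_hasDerivAt
      (fun x ↦ ((((hD 1 (by norm_num) x).const_smul (2 : ℝ)).sub
        (hsmul 2 (by norm_num) x)).sub_const _).congr_deriv (by module))
      (by simp) hF2
  have hF0 : (fun h : ℝ ↦ (3 : ℝ) • D 0 h - h • D 1 h - (2 * h) • D 1 0)
      =O[𝓝 0] (· ^ 5) :=
    isBigO_pow_succ_of_hasDerivAt
      (fun x ↦ ((((hD 0 (by norm_num) x).const_smul (3 : ℝ)).sub
        (hsmul 1 (by norm_num) x)).sub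
        (((hasDerivAt_id x).const_mul 2).smul_const (D 1 0))).congr_deriv (by module))
      (by simpa using hD_zero 0) hF1
  simpa [hD_def, iteratedDeriv_one] using hF0

end

theorem stmt_6 (u : ℝ → ℝ) (hu : ContDiff ℝ 5 u) (xi : ℝ) :
    (fun Δx : ℝ =>
        (3 / (4 * Δx)) * (u (xi + Δx) - u (xi - Δx))
            - (1 / 4) * (deriv u (xi - Δx) + deriv u (xi + Δx))
          - deriv u xi)
      =O[𝓝[>] (0 : ℝ)] fun Δx => Δx ^ 4 := by
  set g : ℝ → ℝ := fun h ↦ u (xi + h) - u (xi - h) with hg_def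
  have hg_odd : g.Odd := fun h ↦ by
    simp only [hg_def, neg_sub, sub_neg_eq_add, ← sub_eq_add_neg]
  have hg : ContDiff ℝ 5 g :=
    (hu.comp (contDiff_const.add contDiff_id)).sub (hu.comp (contDiff_const.sub contDiff_id))
  have hg' : ∀ h, deriv g h = deriv u (xi + h) + deriv u (xi - h) := fun h ↦ by
    have hu' := hu.differentiable (by norm_num)
    exact (((hu' _).hasDerivAt.comp_const_add xi h).sub
      ((hu' _).hasDerivAt.comp_const_sub xi h)).deriv.trans (sub_neg_eq_add _ _)
  have hF := (hg_odd.isBigO_hermite_defect hg).mono (nhdsWithin_le_nhds (s := Set.Ioi 0))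
  simp only [smul_eq_mul] at hF
  refine (((isBigO_refl (fun h : ℝ ↦ (4 * h)⁻¹) _).mul hF).congr' ?_ ?_).trans
    (isBigO_const_mul_self 4⁻¹ _ _)
  · filter_upwards [self_mem_nhdsWithin] with h (hh : 0 < h)
    rw [hg', hg', add_zero, sub_zero]
    field_simp
    ring
  · filter_upwards [self_mem_nhdsWithin] with h (hh : 0 < h)
    field_simp
end

section
/- Let Δx > 0, x_{i±1} = x_i ± Δx, and let q be the unique polynomial of degree at most 4 satisfying q(x_{i−1}) = u_{i−1}, q(x_i) = u_i, q(x_{i+1}) = u_{i+1}, q'(x_{i−1}) = v_{i−1}, q'(x_{i+1}) = v_{i+1}. Then q'(x_i) = (3/(4Δx))(u_{i+1} − u_{i−1}) − (1/4)(v_{i−1} + v_{i+1}). -/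
open Polynomial

theorem Polynomial.four_mul_mul_derivative_eval_eq_of_natDegree_le_four {R : Type*} [CommRing R]
    {p : R[X]} (hp : p.natDegree ≤ 4) (x h : R) :
    4 * h * p.derivative.eval x =
      3 * (p.eval (x + h) - p.eval (x - h)) -
        h * (p.derivative.eval (x - h) + p.derivative.eval (x + h)) := by
  rw [p.as_sum_range' 5 (by omega)]
  simp only [Finset.sum_range_succ, Finset.sum_range_zero, derivative_add, derivative_monomial,
    eval_add, eval_monomial, derivative_zero, eval_zero]
  push_cast
  ring

theorem stmt_7_general (Δx xi uim1 uip1 vim1 vip1 : ℝ) (hΔ : 0 < Δx)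
    (q : Polynomial ℝ) (hdeg : q.natDegree ≤ 4)
    (h1 : q.eval (xi - Δx) = uim1) (h3 : q.eval (xi + Δx) = uip1)
    (h4 : (Polynomial.derivative q).eval (xi - Δx) = vim1)
    (h5 : (Polynomial.derivative q).eval (xi + Δx) = vip1) :
    (Polynomial.derivative q).eval xi
      = (3 / (4 * Δx)) * (uip1 - uim1) - (1 / 4) * (vim1 + vip1) := by
  have key := four_mul_mul_derivative_eval_eq_of_natDegree_le_four hdeg xi Δx
  rw [h1, h3, h4, h5] at key
  have hΔ0 : Δx ≠ 0 := hΔ.ne'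
  field_simp
  linear_combination key

theorem stmt_7 (Δx xi uim1 ui uip1 vim1 vip1 : ℝ) (hΔ : 0 < Δx)
    (q : Polynomial ℝ) (hdeg : q.natDegree ≤ 4)
    (h1 : q.eval (xi - Δx) = uim1) (h2 : q.eval xi = ui) (h3 : q.eval (xi + Δx) = uip1)
    (h4 : (Polynomial.derivative q).eval (xi - Δx) = vim1)
    (h5 : (Polynomial.derivative q).eval (xi + Δx) = vip1) :
    (Polynomial.derivative q).eval xi
      = (3 / (4 * Δx)) * (uip1 - uim1) - (1 / 4) * (vim1 + vip1) :=
  stmt_7_general Δx xi uim1 uip1 vim1 vip1 hΔ q hdeg h1 h3 h4 h5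
end

section
/- Let p be a quadratic polynomial with cell averages f_{i−1}, f_i over intervals of length Δx centered at x_i − Δx and x_i and with derivative cell average h_i over the interval centered at x_i (the small-stencil polynomial p_1). Then its Jiang–Shu smoothness indicator on I_i = [x_i − Δx/2, x_i + Δx/2], β = ∫_{I_i}(Δx (p')^2 + Δx^3 (p'')^2) dx, equals (Δx h_i)^2 + (13/3)(Δx h_i − f_i + f_{i−1})^2. -/
/-!
Write `p = a x² + b x + c`. On an interval of length `δ` centred at `m` a quadratic integrates to
`δ` times its midpoint value plus `a δ³ / 12`, so `h_i = p'(x_i)`, and since the correction terms of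
the two cell averages cancel, `f_i - f_{i-1} = p(x_i) - p(x_i - Δx) = Δx h_i - a Δx²`. Likewise
`β = Δx² p'(x_i)² + (13/3) a² Δx⁴`.
-/

open Polynomial intervalIntegral

theorem Polynomial.exists_eq_quadratic_of_natDegree_le_two {R : Type*} [Semiring R] {p : R[X]}
    (h : p.natDegree ≤ 2) : ∃ a b c, p = C a * X ^ 2 + C b * X + C c :=
  ⟨p.coeff 2, p.coeff 1, p.coeff 0, by
    conv_lhs => rw [p.as_sum_range' 3 (by omega)]
    simp only [Finset.sum_range_succ, Finset.sum_range_zero, ← C_mul_X_pow_eq_monomial, pow_zero,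
      pow_one, mul_one, zero_add]
    abel⟩

theorem integral_quadratic_centered (a b c m δ : ℝ) :
    ∫ x in (m - δ / 2)..(m + δ / 2), (a * x ^ 2 + b * x + c) =
      δ * (a * m ^ 2 + b * m + c) + a * δ ^ 3 / 12 := by
  rw [integral_add, integral_add, integral_const_mul, integral_const_mul, integral_pow, integral_id,
    integral_const, smul_eq_mul]
  · ring
  all_goals apply Continuous.intervalIntegrable; fun_prop

theorem integral_affine_centered (b c m δ : ℝ) :
    ∫ x in (m - δ / 2)..(m + δ / 2), (b * x + c) = δ * (b * m + c) := by
  simpa using integral_quadratic_centered 0 b c m δ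

theorem stmt_15 (Δx xi fim1 fi hi : ℝ) (hΔ : 0 < Δx)
    (p : Polynomial ℝ) (hdeg : p.natDegree ≤ 2)
    (h1 : (1 / Δx) * ∫ x in ((xi - Δx) - Δx / 2)..((xi - Δx) + Δx / 2), p.eval x = fim1)
    (h2 : (1 / Δx) * ∫ x in (xi - Δx / 2)..(xi + Δx / 2), p.eval x = fi)
    (h3 : (1 / Δx) * ∫ x in (xi - Δx / 2)..(xi + Δx / 2), (Polynomial.derivative p).eval x = hi) :
    (∫ x in (xi - Δx / 2)..(xi + Δx / 2),
        (Δx * ((Polynomial.derivative p).eval x) ^ 2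
          + Δx ^ 3 * ((Polynomial.derivative (Polynomial.derivative p)).eval x) ^ 2))
      = (Δx * hi) ^ 2 + (13 / 3) * (Δx * hi - fi + fim1) ^ 2 := by
  obtain ⟨a, b, c, rfl⟩ := exists_eq_quadratic_of_natDegree_le_two hdeg
  have hp' : derivative (C a * X ^ 2 + C b * X + C c) = C (a * 2) * X + C b := by
    rw [derivative_add, derivative_add, derivative_C_mul_X_sq, derivative_C_mul_X, derivative_C,
      add_zero]
  have hp'' : derivative (C (a * 2) * X + C b) = C (a * 2) := by
    rw [derivative_add, derivative_C_mul_X, derivative_C, add_zero]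
  have hβ : ∀ x, Δx * (a * 2 * x + b) ^ 2 + Δx ^ 3 * (a * 2) ^ 2 =
      4 * Δx * a ^ 2 * x ^ 2 + 4 * Δx * a * b * x + (Δx * b ^ 2 + 4 * Δx ^ 3 * a ^ 2) := by
    intro x; ring
  simp only [hp', hp'', eval_add, eval_mul, eval_C, eval_pow, eval_X, hβ,
    integral_quadratic_centered, integral_affine_centered] at h1 h2 h3 ⊢
  subst h1 h2 h3
  field_simp [hΔ.ne']
  ring
end

section
/- Let u : ℝ → ℝ be smooth and define for each Δx > 0 the modified derivative ṽ = λ_0((1/d_0) A − (d_1/d_0) B − (d_2/d_0) C) + λ_1 B + λ_2 C, where A = (3/(4Δx))(u(x+Δx) − u(x−Δx)) − (1/4)(u'(x−Δx) + u'(x+Δx)), B = (u(x) − u(x−Δx))/Δx, C = (u(x+Δx) − u(x))/Δx, d_0, d_1, d_2 > 0 sum to 1, and λ_ℓ are any nonnegative weights summing to 1 with λ_ℓ = d_ℓ + O(Δx^2). Then |ṽ − u'(x)| = O(Δx^3) as Δx → 0; and if λ_ℓ = d_ℓ + O(Δx^3), then |ṽ − u'(x)| = O(Δx^4). -/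
open Filter Asymptotics Topology Set

private lemma key_step {f g : ℝ → ℝ} (hfg : ∀ y, HasDerivAt f (g y) y) (hgc : Continuous g)
    (hf0 : f 0 = 0) {k : ℕ} (hk : g =O[𝓝[>] (0:ℝ)] fun h => h ^ k) :
    f =O[𝓝[>] (0:ℝ)] fun h => h ^ (k+1) := by
  obtain ⟨C, hC⟩ := hk.bound
  set C' := max C 0 with hC'def
  have hC'0 : 0 ≤ C' := le_max_right _ _
  have hC' : ∀ᶠ h in 𝓝[>] (0:ℝ), ‖g h‖ ≤ C' * h ^ k := by
    filter_upwards [hC, self_mem_nhdsWithin] with h h1 (h2 : (0:ℝ) < h)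
    calc ‖g h‖ ≤ C * ‖h ^ k‖ := h1
    _ ≤ C' * h ^ k := by
        rw [Real.norm_eq_abs, abs_of_nonneg (by positivity)]
        exact mul_le_mul_of_nonneg_right (le_max_left _ _) (by positivity)
  obtain ⟨δ, hδ, hsub⟩ := mem_nhdsGT_iff_exists_Ioo_subset.mp hC'
  rw [isBigO_iff]
  refine ⟨C', ?_⟩
  have hmem : Ioo (0:ℝ) δ ∈ 𝓝[>] (0:ℝ) := Ioo_mem_nhdsGT_of_mem ⟨le_refl _, hδ⟩
  filter_upwards [hmem] with h hh
  have h0 : (0:ℝ) < h := hh.1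
  have hb : ∀ t ∈ Icc (0:ℝ) h, ‖g t‖ ≤ C' * h ^ k := by
    intro t ht
    rcases eq_or_lt_of_le ht.1 with h0t | h0t
    · subst h0t
      have htend : Tendsto (fun t => ‖g t‖) (𝓝[>] (0:ℝ)) (𝓝 ‖g 0‖) :=
        ((hgc.norm.tendsto 0)).mono_left nhdsWithin_le_nhds
      refine le_of_tendsto htend ?_
      have hmem2 : Ioo (0:ℝ) (min δ h) ∈ 𝓝[>] (0:ℝ) :=
        Ioo_mem_nhdsGT_of_mem ⟨le_refl _, lt_min hδ h0⟩
      filter_upwards [hmem2] with t htt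
      calc ‖g t‖ ≤ C' * t ^ k := hsub ⟨htt.1, htt.2.trans_le (min_le_left _ _)⟩
      _ ≤ C' * h ^ k := mul_le_mul_of_nonneg_left
          (pow_le_pow_left₀ htt.1.le (htt.2.le.trans (min_le_right _ _)) k) hC'0
    · have : t ∈ Ioo (0:ℝ) δ := ⟨h0t, lt_of_le_of_lt ht.2 hh.2⟩
      calc ‖g t‖ ≤ C' * t ^ k := hsub this
      _ ≤ C' * h ^ k := mul_le_mul_of_nonneg_left (pow_le_pow_left₀ h0t.le ht.2 k) hC'0
  have := norm_image_sub_le_of_norm_deriv_le_segment'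
    (f' := g) (fun t ht => (hfg t).hasDerivWithinAt) (fun t ht => hb t (Ico_subset_Icc_self ht))
    h (right_mem_Icc.mpr h0.le)
  rw [hf0, sub_zero] at this
  calc ‖f h‖ ≤ C' * h ^ k * (h - 0) := this
  _ = C' * ‖h ^ (k+1)‖ := by
      rw [Real.norm_eq_abs, abs_of_nonneg (by positivity), sub_zero, pow_succ]; ring

private lemma cont_isBigO {g : ℝ → ℝ} (hg : Continuous g) :
    g =O[𝓝[>] (0:ℝ)] fun h => h ^ (0:ℕ) := by
  have : g =O[𝓝[>] (0:ℝ)] (fun _ => (1:ℝ)) :=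
    ((hg.tendsto 0).mono_left nhdsWithin_le_nhds).isBigO_one ℝ
  simpa using this

private lemma div_h {f : ℝ → ℝ} {k : ℕ} (hf : f =O[𝓝[>] (0:ℝ)] fun h => h ^ (k+1)) :
    (fun h => f h / h) =O[𝓝[>] (0:ℝ)] fun h => h ^ k := by
  have := hf.mul (isBigO_refl (fun h : ℝ => h⁻¹) _)
  refine this.congr' (by filter_upwards with h using (div_eq_mul_inv _ _).symm) ?_
  filter_upwards [self_mem_nhdsWithin] with h (hh : (0:ℝ) < h)
  rw [pow_succ, mul_assoc, mul_inv_cancel₀ hh.ne', mul_one]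

private lemma pow_bigO {m n : ℕ} (hmn : m ≤ n) :
    (fun h : ℝ => h ^ n) =O[𝓝[>] (0:ℝ)] fun h => h ^ m := by
  rw [isBigO_iff]
  refine ⟨1, ?_⟩
  have hmem : Ioo (0:ℝ) 1 ∈ 𝓝[>] (0:ℝ) := Ioo_mem_nhdsGT_of_mem ⟨le_refl _, one_pos⟩
  filter_upwards [hmem] with h hh
  rw [Real.norm_eq_abs, Real.norm_eq_abs, abs_of_nonneg (pow_nonneg hh.1.le _),
    abs_of_nonneg (pow_nonneg hh.1.le _), one_mul]
  exact pow_le_pow_of_le_one hh.1.le hh.2.le hmn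

private noncomputable def ph (u : ℝ → ℝ) (x : ℝ) (k : ℕ) (h : ℝ) : ℝ := iteratedDeriv k u (x + h)
private noncomputable def mh (u : ℝ → ℝ) (x : ℝ) (k : ℕ) (h : ℝ) : ℝ := iteratedDeriv k u (x - h)

section helpers
variable {u : ℝ → ℝ} (hu : ContDiff ℝ (⊤:ℕ∞) u) (x : ℝ)
include hu

private lemma contD (k : ℕ) : Continuous (iteratedDeriv k u) := by
  rw [iteratedDeriv_eq_iterate]
  exact (ContDiff.iterate_deriv k hu).continuous

private lemma hasDerivD (k : ℕ) (y : ℝ) :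
    HasDerivAt (iteratedDeriv k u) (iteratedDeriv (k+1) u y) y := by
  rw [iteratedDeriv_succ]
  have h : ContDiff ℝ (⊤:ℕ∞) (iteratedDeriv k u) := by
    rw [iteratedDeriv_eq_iterate]; exact ContDiff.iterate_deriv k hu
  exact (h.differentiable (by simp)).differentiableAt.hasDerivAt

private lemma hasDerivP (k : ℕ) (h : ℝ) :
    HasDerivAt (ph u x k) (ph u x (k+1) h) h := by
  have := (hasDerivD hu k (x + h)).comp h ((hasDerivAt_id h).const_add x)
  show HasDerivAt (fun h => iteratedDeriv k u (x + h)) (iteratedDeriv (k+1) u (x + h)) h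
  simpa [Function.comp_def] using this

private lemma hasDerivM (k : ℕ) (h : ℝ) :
    HasDerivAt (mh u x k) (-(mh u x (k+1) h)) h := by
  have := (hasDerivD hu k (x - h)).comp h ((hasDerivAt_id h).const_sub x)
  show HasDerivAt (fun h => iteratedDeriv k u (x - h)) (-(iteratedDeriv (k+1) u (x - h))) h
  simpa [Function.comp_def] using this

private lemma contP (k : ℕ) : Continuous (ph u x k) :=
  (contD hu k).comp (continuous_const.add continuous_id)

private lemma contM (k : ℕ) : Continuous (mh u x k) :=
  (contD hu k).comp (continuous_const.sub continuous_id)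

end helpers

private noncomputable def A0 (u : ℝ → ℝ) (x h : ℝ) : ℝ :=
  3/4*(ph u x 0 h - mh u x 0 h) - h/4*(mh u x 1 h + ph u x 1 h) - h * iteratedDeriv 1 u x
private noncomputable def A1 (u : ℝ → ℝ) (x h : ℝ) : ℝ :=
  1/2*(ph u x 1 h + mh u x 1 h) - h/4*(ph u x 2 h - mh u x 2 h) - iteratedDeriv 1 u x
private noncomputable def A2 (u : ℝ → ℝ) (x h : ℝ) : ℝ :=
  1/4*(ph u x 2 h - mh u x 2 h) - h/4*(ph u x 3 h + mh u x 3 h)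
private noncomputable def A3 (u : ℝ → ℝ) (x h : ℝ) : ℝ :=
  -(h/4)*(ph u x 4 h - mh u x 4 h)
private noncomputable def A4 (u : ℝ → ℝ) (x h : ℝ) : ℝ :=
  -(1/4)*(ph u x 4 h - mh u x 4 h) - h/4*(ph u x 5 h + mh u x 5 h)
private noncomputable def A5 (u : ℝ → ℝ) (x h : ℝ) : ℝ :=
  -(1/2)*(ph u x 5 h + mh u x 5 h) - h/4*(ph u x 6 h - mh u x 6 h)

section est
variable {u : ℝ → ℝ} (hu : ContDiff ℝ (⊤:ℕ∞) u) (x : ℝ)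
include hu

private lemma dA0 (h : ℝ) : HasDerivAt (A0 u x) (A1 u x h) h := by
  have H := ((((hasDerivP hu x 0 h).sub (hasDerivM hu x 0 h)).const_mul ((3:ℝ)/4)).sub
      (((hasDerivAt_id h).div_const 4).mul ((hasDerivM hu x 1 h).add (hasDerivP hu x 1 h)))).sub
      ((hasDerivAt_id h).mul_const (iteratedDeriv 1 u x))
  refine H.congr_deriv ?_
  simp only [A1, id_eq, Nat.reduceAdd, Pi.add_apply, Pi.sub_apply, Pi.neg_apply]; ring

private lemma dA1 (h : ℝ) : HasDerivAt (A1 u x) (A2 u x h) h := by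
  have H := ((((hasDerivP hu x 1 h).add (hasDerivM hu x 1 h)).const_mul ((1:ℝ)/2)).sub
      (((hasDerivAt_id h).div_const 4).mul ((hasDerivP hu x 2 h).sub (hasDerivM hu x 2 h)))).sub
      (hasDerivAt_const h (iteratedDeriv 1 u x))
  refine H.congr_deriv ?_
  simp only [A2, id_eq, Nat.reduceAdd, Pi.add_apply, Pi.sub_apply, Pi.neg_apply]; ring

private lemma dA2 (h : ℝ) : HasDerivAt (A2 u x) (A3 u x h) h := by
  have H := (((hasDerivP hu x 2 h).sub (hasDerivM hu x 2 h)).const_mul ((1:ℝ)/4)).sub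
      (((hasDerivAt_id h).div_const 4).mul ((hasDerivP hu x 3 h).add (hasDerivM hu x 3 h)))
  refine H.congr_deriv ?_
  simp only [A3, id_eq, Nat.reduceAdd, Pi.add_apply, Pi.sub_apply, Pi.neg_apply]; ring

private lemma dA3 (h : ℝ) : HasDerivAt (A3 u x) (A4 u x h) h := by
  have H := (((hasDerivAt_id h).div_const 4).neg.mul
      ((hasDerivP hu x 4 h).sub (hasDerivM hu x 4 h)))
  refine H.congr_deriv ?_
  simp only [A4, id_eq, Nat.reduceAdd, Pi.add_apply, Pi.sub_apply, Pi.neg_apply]; ring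

private lemma dA4 (h : ℝ) : HasDerivAt (A4 u x) (A5 u x h) h := by
  have H := ((((hasDerivP hu x 4 h).sub (hasDerivM hu x 4 h)).const_mul (-(1/4) : ℝ)).sub
      (((hasDerivAt_id h).div_const 4).mul ((hasDerivP hu x 5 h).add (hasDerivM hu x 5 h))))
  refine H.congr_deriv ?_
  simp only [A5, id_eq, Nat.reduceAdd, Pi.add_apply, Pi.sub_apply, Pi.neg_apply]; ring

private lemma contA1 : Continuous (A1 u x) := by
  unfold A1
  exact ((continuous_const.mul ((contP hu x 1).add (contM hu x 1))).sub
    ((continuous_id.div_const 4).mul ((contP hu x 2).sub (contM hu x 2)))).sub continuous_const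

private lemma contA2 : Continuous (A2 u x) := by
  unfold A2
  exact (continuous_const.mul ((contP hu x 2).sub (contM hu x 2))).sub
    ((continuous_id.div_const 4).mul ((contP hu x 3).add (contM hu x 3)))

private lemma contA3 : Continuous (A3 u x) := by
  unfold A3
  exact ((continuous_id.div_const 4).neg).mul ((contP hu x 4).sub (contM hu x 4))

private lemma contA4 : Continuous (A4 u x) := by
  unfold A4
  exact (continuous_const.mul ((contP hu x 4).sub (contM hu x 4))).sub
    ((continuous_id.div_const 4).mul ((contP hu x 5).add (contM hu x 5)))

private lemma contA5 : Continuous (A5 u x) := by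
  unfold A5
  exact (continuous_const.mul ((contP hu x 5).add (contM hu x 5))).sub
    ((continuous_id.div_const 4).mul ((contP hu x 6).sub (contM hu x 6)))

private lemma estA0 : (A0 u x) =O[𝓝[>] (0:ℝ)] fun h => h ^ (5:ℕ) := by
  have k5 : (A5 u x) =O[𝓝[>] (0:ℝ)] fun h => h ^ (0:ℕ) := cont_isBigO (contA5 hu x)
  have k4 : (A4 u x) =O[𝓝[>] (0:ℝ)] fun h => h ^ (1:ℕ) :=
    key_step (dA4 hu x) (contA5 hu x) (by simp [A4, ph, mh]) k5
  have k3 : (A3 u x) =O[𝓝[>] (0:ℝ)] fun h => h ^ (2:ℕ) :=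
    key_step (dA3 hu x) (contA4 hu x) (by simp [A3, ph, mh]) k4
  have k2 : (A2 u x) =O[𝓝[>] (0:ℝ)] fun h => h ^ (3:ℕ) :=
    key_step (dA2 hu x) (contA3 hu x) (by simp [A2, ph, mh]) k3
  have k1 : (A1 u x) =O[𝓝[>] (0:ℝ)] fun h => h ^ (4:ℕ) :=
    key_step (dA1 hu x) (contA2 hu x) (by simp [A1, ph, mh]; ring) k2
  exact key_step (dA0 hu x) (contA1 hu x) (by simp [A0, ph, mh]) k1

private lemma estA :
    (fun h : ℝ => (3/(4*h)) * (u (x+h) - u (x-h))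
        - (1/4) * (deriv u (x-h) + deriv u (x+h)) - deriv u x)
      =O[𝓝[>] (0:ℝ)] fun h => h ^ (4:ℕ) := by
  have := div_h (k := 4) (estA0 hu x)
  refine this.congr' ?_ EventuallyEq.rfl
  filter_upwards [self_mem_nhdsWithin] with h (hh : (0:ℝ) < h)
  simp only [A0, ph, mh, iteratedDeriv_zero, iteratedDeriv_one]
  field_simp

private lemma estB :
    (fun h : ℝ => (u x - u (x-h)) / h - deriv u x) =O[𝓝[>] (0:ℝ)] fun h => h ^ (1:ℕ) := by
  have k2 : (fun h => -(mh u x 2 h)) =O[𝓝[>] (0:ℝ)] fun h => h ^ (0:ℕ) :=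
    cont_isBigO (contM hu x 2).neg
  have d1 : ∀ h, HasDerivAt (fun h => mh u x 1 h - iteratedDeriv 1 u x)
      (-(mh u x 2 h)) h := by
    intro h
    exact (hasDerivM hu x 1 h).sub_const (iteratedDeriv 1 u x)
  have k1 : (fun h => mh u x 1 h - iteratedDeriv 1 u x) =O[𝓝[>] (0:ℝ)] fun h => h ^ (1:ℕ) :=
    key_step d1 (contM hu x 2).neg (by simp [mh]) k2
  have d0 : ∀ h, HasDerivAt (fun h => u x - mh u x 0 h - h * iteratedDeriv 1 u x)
      (mh u x 1 h - iteratedDeriv 1 u x) h := by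
    intro h
    have H := ((hasDerivAt_const h (u x)).sub (hasDerivM hu x 0 h)).sub
      ((hasDerivAt_id h).mul_const (iteratedDeriv 1 u x))
    refine H.congr_deriv ?_; ring
  have k0 : (fun h => u x - mh u x 0 h - h * iteratedDeriv 1 u x)
      =O[𝓝[>] (0:ℝ)] fun h => h ^ (2:ℕ) :=
    key_step d0 (((contM hu x 1).sub continuous_const)) (by simp [mh]) k1
  have := div_h (k := 1) k0
  refine this.congr' ?_ EventuallyEq.rfl
  filter_upwards [self_mem_nhdsWithin] with h (hh : (0:ℝ) < h)
  simp only [mh, iteratedDeriv_zero, iteratedDeriv_one]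
  field_simp

private lemma estC :
    (fun h : ℝ => (u (x+h) - u x) / h - deriv u x) =O[𝓝[>] (0:ℝ)] fun h => h ^ (1:ℕ) := by
  have k2 : (fun h => ph u x 2 h) =O[𝓝[>] (0:ℝ)] fun h => h ^ (0:ℕ) :=
    cont_isBigO (contP hu x 2)
  have d1 : ∀ h, HasDerivAt (fun h => ph u x 1 h - iteratedDeriv 1 u x)
      (ph u x 2 h) h := by
    intro h
    exact (hasDerivP hu x 1 h).sub_const (iteratedDeriv 1 u x)
  have k1 : (fun h => ph u x 1 h - iteratedDeriv 1 u x) =O[𝓝[>] (0:ℝ)] fun h => h ^ (1:ℕ) :=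
    key_step d1 (contP hu x 2) (by simp [ph]) k2
  have d0 : ∀ h, HasDerivAt (fun h => ph u x 0 h - u x - h * iteratedDeriv 1 u x)
      (ph u x 1 h - iteratedDeriv 1 u x) h := by
    intro h
    have H := ((hasDerivP hu x 0 h).sub (hasDerivAt_const h (u x))).sub
      ((hasDerivAt_id h).mul_const (iteratedDeriv 1 u x))
    refine H.congr_deriv ?_; ring
  have k0 : (fun h => ph u x 0 h - u x - h * iteratedDeriv 1 u x)
      =O[𝓝[>] (0:ℝ)] fun h => h ^ (2:ℕ) :=
    key_step d0 (((contP hu x 1).sub continuous_const)) (by simp [ph]) k1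
  have := div_h (k := 1) k0
  refine this.congr' ?_ EventuallyEq.rfl
  filter_upwards [self_mem_nhdsWithin] with h (hh : (0:ℝ) < h)
  simp only [ph, iteratedDeriv_zero, iteratedDeriv_one]
  field_simp

end est

private lemma combine (u : ℝ → ℝ) (hu : ContDiff ℝ (⊤:ℕ∞) u) (x : ℝ)
    (d0 d1 d2 : ℝ) (hd0 : 0 < d0) (hd : d0 + d1 + d2 = 1)
    (lam0 lam1 lam2 : ℝ → ℝ) (hsum : ∀ Δx : ℝ, lam0 Δx + lam1 Δx + lam2 Δx = 1)
    (s : ℕ) (hs : s + 1 ≤ 4)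
    (e0 : (fun Δx => lam0 Δx - d0) =O[𝓝[>] (0 : ℝ)] fun Δx => Δx ^ s)
    (e1 : (fun Δx => lam1 Δx - d1) =O[𝓝[>] (0 : ℝ)] fun Δx => Δx ^ s)
    (e2 : (fun Δx => lam2 Δx - d2) =O[𝓝[>] (0 : ℝ)] fun Δx => Δx ^ s) :
    (fun Δx : ℝ =>
          lam0 Δx * ((1 / d0) * ((3 / (4 * Δx)) * (u (x + Δx) - u (x - Δx))
                - (1 / 4) * (deriv u (x - Δx) + deriv u (x + Δx)))
              - (d1 / d0) * ((u x - u (x - Δx)) / Δx)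
              - (d2 / d0) * ((u (x + Δx) - u x) / Δx))
            + lam1 Δx * ((u x - u (x - Δx)) / Δx)
            + lam2 Δx * ((u (x + Δx) - u x) / Δx)
          - deriv u x) =O[𝓝[>] (0 : ℝ)] fun Δx => Δx ^ (s+1) := by
  set c := deriv u x
  set EA : ℝ → ℝ := fun h => (3/(4*h)) * (u (x+h) - u (x-h))
      - (1/4) * (deriv u (x-h) + deriv u (x+h)) - c with hEA
  set EB : ℝ → ℝ := fun h => (u x - u (x-h)) / h - c with hEB
  set EC : ℝ → ℝ := fun h => (u (x+h) - u x) / h - c with hEC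
  have hA : EA =O[𝓝[>] (0:ℝ)] fun h => h ^ (4:ℕ) := estA hu x
  have hB : EB =O[𝓝[>] (0:ℝ)] fun h => h ^ (1:ℕ) := estB hu x
  have hC : EC =O[𝓝[>] (0:ℝ)] fun h => h ^ (1:ℕ) := estC hu x
  have hA1 : EA =O[𝓝[>] (0:ℝ)] fun h => h ^ (1:ℕ) := hA.trans (pow_bigO (by norm_num))
  -- the "S0 - c" term
  have hS : (fun h => (1/d0) * EA h - (d1/d0) * EB h - (d2/d0) * EC h)
      =O[𝓝[>] (0:ℝ)] fun h => h ^ (1:ℕ) :=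
    ((hA1.const_mul_left _).sub (hB.const_mul_left _)).sub (hC.const_mul_left _)
  have mulO : ∀ (e T : ℝ → ℝ), (e =O[𝓝[>] (0:ℝ)] fun h => h ^ s) →
      (T =O[𝓝[>] (0:ℝ)] fun h => h ^ (1:ℕ)) →
      (fun h => e h * T h) =O[𝓝[>] (0:ℝ)] fun h => h ^ (s+1) := by
    intro e T he hT
    have := he.mul hT
    refine this.congr' EventuallyEq.rfl ?_
    filter_upwards with h
    simp [pow_succ]
  have main : (fun h => EA h + (lam0 h - d0) * ((1/d0) * EA h - (d1/d0) * EB h - (d2/d0) * EC h)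
      + (lam1 h - d1) * EB h + (lam2 h - d2) * EC h)
      =O[𝓝[>] (0:ℝ)] fun h => h ^ (s+1) :=
    (((hA.trans (pow_bigO hs)).add (mulO _ _ e0 hS)).add (mulO _ _ e1 hB)).add (mulO _ _ e2 hC)
  refine main.congr' ?_ EventuallyEq.rfl
  filter_upwards [self_mem_nhdsWithin] with h (hh : (0:ℝ) < h)
  have hl : lam0 h = 1 - lam1 h - lam2 h := by linarith [hsum h]
  have hdd : d2 = 1 - d0 - d1 := by linarith
  simp only [hEA, hEB, hEC]
  rw [hl, hdd]
  field_simp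
  ring

theorem stmt_16 (u : ℝ → ℝ) (hu : ContDiff ℝ (⊤ : ℕ∞) u) (x : ℝ)
    (d0 d1 d2 : ℝ) (hd0 : 0 < d0) (hd1 : 0 < d1) (hd2 : 0 < d2) (hd : d0 + d1 + d2 = 1)
    (lam0 lam1 lam2 : ℝ → ℝ)
    (hnn : ∀ Δx : ℝ, 0 ≤ lam0 Δx ∧ 0 ≤ lam1 Δx ∧ 0 ≤ lam2 Δx)
    (hsum : ∀ Δx : ℝ, lam0 Δx + lam1 Δx + lam2 Δx = 1) :
    (((fun Δx => lam0 Δx - d0) =O[𝓝[>] (0 : ℝ)] fun Δx => Δx ^ 2) →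
     ((fun Δx => lam1 Δx - d1) =O[𝓝[>] (0 : ℝ)] fun Δx => Δx ^ 2) →
     ((fun Δx => lam2 Δx - d2) =O[𝓝[>] (0 : ℝ)] fun Δx => Δx ^ 2) →
      ((fun Δx : ℝ =>
          lam0 Δx * ((1 / d0) * ((3 / (4 * Δx)) * (u (x + Δx) - u (x - Δx))
                - (1 / 4) * (deriv u (x - Δx) + deriv u (x + Δx)))
              - (d1 / d0) * ((u x - u (x - Δx)) / Δx)
              - (d2 / d0) * ((u (x + Δx) - u x) / Δx))
            + lam1 Δx * ((u x - u (x - Δx)) / Δx)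
            + lam2 Δx * ((u (x + Δx) - u x) / Δx)
          - deriv u x) =O[𝓝[>] (0 : ℝ)] fun Δx => Δx ^ 3)) ∧
    (((fun Δx => lam0 Δx - d0) =O[𝓝[>] (0 : ℝ)] fun Δx => Δx ^ 3) →
     ((fun Δx => lam1 Δx - d1) =O[𝓝[>] (0 : ℝ)] fun Δx => Δx ^ 3) →
     ((fun Δx => lam2 Δx - d2) =O[𝓝[>] (0 : ℝ)] fun Δx => Δx ^ 3) →
      ((fun Δx : ℝ =>
          lam0 Δx * ((1 / d0) * ((3 / (4 * Δx)) * (u (x + Δx) - u (x - Δx))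
                - (1 / 4) * (deriv u (x - Δx) + deriv u (x + Δx)))
              - (d1 / d0) * ((u x - u (x - Δx)) / Δx)
              - (d2 / d0) * ((u (x + Δx) - u x) / Δx))
            + lam1 Δx * ((u x - u (x - Δx)) / Δx)
            + lam2 Δx * ((u (x + Δx) - u x) / Δx)
          - deriv u x) =O[𝓝[>] (0 : ℝ)] fun Δx => Δx ^ 4)) := by
  have hu' : ContDiff ℝ (⊤:ℕ∞) u := hu.of_le (by simp)
  constructor
  · intro e0 e1 e2
    have := combine u hu' x d0 d1 d2 hd0 hd lam0 lam1 lam2 hsum 2 (by norm_num) e0 e1 e2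
    simpa using this
  · intro e0 e1 e2
    have := combine u hu' x d0 d1 d2 hd0 hd lam0 lam1 lam2 hsum 3 (by norm_num) e0 e1 e2
    simpa using this
end

section
/- Let φ be a C^6 function and define f_{i+ℓ} = (1/Δx)∫ over the cell centered at x_i + ℓΔx of φ, and h_{i+ℓ} = (1/Δx)∫ over the same cell of φ'. Then the quintic reconstruction value (11/60) f_{i−1} + (19/30) f_i + (11/60) f_{i+1} + (Δx/20)(h_{i−1} + 10 h_i − h_{i+1}) equals φ(x_i + Δx/2) + O(Δx^6) as Δx → 0. -/
open intervalIntegral Filter Asymptotics Topology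

section Stmt17Aux

lemma stmt17_itadd {n : ℕ} {f g : ℝ → ℝ} (hf : ContDiff ℝ n f) (hg : ContDiff ℝ n g) (x : ℝ) :
    iteratedDeriv n (fun t => f t + g t) x = iteratedDeriv n f x + iteratedDeriv n g x := by
  have := iteratedDerivWithin_add (Set.mem_univ x) uniqueDiffOn_univ hf.contDiffWithinAt hg.contDiffWithinAt
  simp only [iteratedDerivWithin_univ] at this; exact this

lemma stmt17_itsub {n : ℕ} {f g : ℝ → ℝ} (hf : ContDiff ℝ n f) (hg : ContDiff ℝ n g) (x : ℝ) :
    iteratedDeriv n (fun t => f t - g t) x = iteratedDeriv n f x - iteratedDeriv n g x := by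
  have := iteratedDerivWithin_sub (Set.mem_univ x) uniqueDiffOn_univ hf.contDiffWithinAt hg.contDiffWithinAt
  simp only [iteratedDerivWithin_univ] at this; exact this

lemma stmt17_itcmul {n : ℕ} {f : ℝ → ℝ} (hf : ContDiff ℝ n f) (c x : ℝ) :
    iteratedDeriv n (fun t => c * f t) x = c * iteratedDeriv n f x := by
  have := iteratedDerivWithin_const_mul (Set.mem_univ x) uniqueDiffOn_univ c hf.contDiffWithinAt
  simpa [iteratedDerivWithin_univ] using this

lemma stmt17_node {k : ℕ} {f : ℝ → ℝ} (hf : ContDiff ℝ k f) (c x0 : ℝ) :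
    iteratedDeriv k (fun t => f (x0 + c * t)) 0 = c ^ k * iteratedDeriv k f x0 := by
  have h1 : ContDiff ℝ k (fun z => f (x0 + z)) := hf.comp (contDiff_const.add contDiff_id)
  have h2 := congrFun (iteratedDeriv_comp_const_mul h1 c) 0
  simp only [iteratedDeriv_comp_const_add] at h2
  simpa using h2

lemma stmt17_combo {k : ℕ} {f : ℝ → ℝ} (hf : ContDiff ℝ k f) (x0 w1 w2 w3 w4 c1 c2 c3 c4 : ℝ) :
    iteratedDeriv k (fun t => w1 * f (x0 + c1 * t) + w2 * f (x0 + c2 * t)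
        + w3 * f (x0 + c3 * t) + w4 * f (x0 + c4 * t)) 0
      = (w1 * c1 ^ k + w2 * c2 ^ k + w3 * c3 ^ k + w4 * c4 ^ k) * iteratedDeriv k f x0 := by
  have haff : ∀ c : ℝ, ContDiff ℝ k fun t : ℝ => f (x0 + c * t) := fun c =>
    hf.comp (contDiff_const.add (contDiff_const.mul contDiff_id))
  have hterm : ∀ w c : ℝ, ContDiff ℝ k fun t : ℝ => w * f (x0 + c * t) := fun w c =>
    contDiff_const.mul (haff c)
  rw [stmt17_itadd (((hterm w1 c1).add (hterm w2 c2)).add (hterm w3 c3)) (hterm w4 c4),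
    stmt17_itadd ((hterm w1 c1).add (hterm w2 c2)) (hterm w3 c3),
    stmt17_itadd (hterm w1 c1) (hterm w2 c2),
    stmt17_itcmul (haff c1), stmt17_itcmul (haff c2), stmt17_itcmul (haff c3),
    stmt17_itcmul (haff c4),
    stmt17_node hf c1 x0, stmt17_node hf c2 x0, stmt17_node hf c3 x0, stmt17_node hf c4 x0]
  ring

theorem stmt17_bigO (n : ℕ) (f : ℝ → ℝ) (hf : ContDiff ℝ (n+1) f)
    (hz : ∀ k ≤ n, iteratedDeriv k f 0 = 0) :
    f =O[𝓝 (0:ℝ)] fun t => t ^ (n+1) := by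
  induction n generalizing f with
  | zero =>
    have hd : DifferentiableAt ℝ f 0 := (hf.differentiable (by norm_num)).differentiableAt
    have h := hd.hasDerivAt.isBigO_sub
    have h0 : f 0 = 0 := by simpa using hz 0 le_rfl
    have : (fun x => f x) =O[𝓝 (0:ℝ)] fun x => x - 0 := by
      simpa [h0] using h
    simpa using this
  | succ n IH =>
    have hf' : ContDiff ℝ (n+1) (deriv f) := by
      have : ContDiff ℝ ((n+1 : ℕ) + 1) f := by exact_mod_cast hf
      exact ((contDiff_succ_iff_deriv).1 this).2.2
    have hz' : ∀ k ≤ n, iteratedDeriv k (deriv f) 0 = 0 := by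
      intro k hk
      have := hz (k+1) (by omega)
      rwa [iteratedDeriv_succ'] at this
    have hO := IH (deriv f) hf' hz'
    obtain ⟨C, hC0, hC⟩ := hO.exists_pos
    rw [IsBigOWith] at hC
    rw [Metric.eventually_nhds_iff] at hC
    obtain ⟨δ, hδ0, hδ⟩ := hC
    have h0 : f 0 = 0 := by simpa using hz 0 (by omega)
    rw [isBigO_iff]
    refine ⟨C, ?_⟩
    rw [Metric.eventually_nhds_iff]
    refine ⟨δ, hδ0, fun t ht => ?_⟩
    simp only [dist_zero_right, Real.norm_eq_abs] at ht ⊢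
    have hdiff : ∀ x ∈ Metric.closedBall (0:ℝ) |t|, DifferentiableAt ℝ f x :=
      fun x _ => (hf.differentiable (by norm_num)).differentiableAt
    have hbound : ∀ x ∈ Metric.closedBall (0:ℝ) |t|, ‖deriv f x‖ ≤ C * |t| ^ (n+1) := by
      intro x hx
      simp only [Metric.mem_closedBall, dist_zero_right, Real.norm_eq_abs] at hx
      have hxδ : dist x 0 < δ := by
        simp only [dist_zero_right, Real.norm_eq_abs]; linarith
      have := hδ hxδ
      simp only [Real.norm_eq_abs, abs_pow] at this
      calc ‖deriv f x‖ ≤ C * |x| ^ (n+1) := this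
        _ ≤ C * |t| ^ (n+1) := by
            have := pow_le_pow_left₀ (abs_nonneg x) hx (n+1)
            nlinarith
    have hmvt := Convex.norm_image_sub_le_of_norm_deriv_le hdiff hbound
      (convex_closedBall (0:ℝ) |t|) (Metric.mem_closedBall_self (abs_nonneg t))
      (show t ∈ Metric.closedBall (0:ℝ) |t| by
        simp [Metric.mem_closedBall, dist_zero_right, Real.norm_eq_abs])
    simp only [h0, sub_zero, Real.norm_eq_abs] at hmvt
    calc |f t| ≤ C * |t|^(n+1) * |t| := hmvt
      _ = C * |t^(n+1+1)| := by rw [abs_pow]; ring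

end Stmt17Aux

theorem stmt_17 (φ : ℝ → ℝ) (hφ : ContDiff ℝ 6 φ) (xi : ℝ) :
    (fun Δx : ℝ =>
        (11 / 60) * ((1 / Δx) * ∫ x in ((xi - Δx) - Δx / 2)..((xi - Δx) + Δx / 2), φ x)
          + (19 / 30) * ((1 / Δx) * ∫ x in (xi - Δx / 2)..(xi + Δx / 2), φ x)
          + (11 / 60) * ((1 / Δx) * ∫ x in ((xi + Δx) - Δx / 2)..((xi + Δx) + Δx / 2), φ x)
          + (Δx / 20) *
            (((1 / Δx) * ∫ x in ((xi - Δx) - Δx / 2)..((xi - Δx) + Δx / 2), deriv φ x)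
              + 10 * ((1 / Δx) * ∫ x in (xi - Δx / 2)..(xi + Δx / 2), deriv φ x)
              - ((1 / Δx) * ∫ x in ((xi + Δx) - Δx / 2)..((xi + Δx) + Δx / 2), deriv φ x))
          - φ (xi + Δx / 2))
      =O[𝓝[>] (0 : ℝ)] fun Δx => Δx ^ 6 := by
  have hc : Continuous φ := hφ.continuous
  set Φ : ℝ → ℝ := fun t => ∫ x in xi..t, φ x with hΦdef
  have hΦd : ∀ t, HasDerivAt Φ (φ t) t := fun t =>
    (hc.integral_hasStrictDerivAt xi t).hasDerivAt
  have hdΦ : deriv Φ = φ := funext fun t => (hΦd t).deriv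
  have hΦ7 : ContDiff ℝ 7 Φ := by
    rw [show (7 : WithTop ℕ∞) = 6 + 1 from rfl, contDiff_succ_iff_deriv]
    refine ⟨fun t => (hΦd t).differentiableAt, by simp, ?_⟩
    rw [hdΦ]; exact hφ
  have hint : ∀ a b : ℝ, ∫ x in a..b, φ x = Φ b - Φ a := by
    intro a b
    rw [hΦdef]
    exact (integral_interval_sub_left (hc.intervalIntegrable xi b)
      (hc.intervalIntegrable xi a)).symm
  have hdc : Continuous (deriv φ) := hφ.continuous_deriv (by norm_num)
  have hintd : ∀ a b : ℝ, ∫ x in a..b, deriv φ x = φ b - φ a := fun a b =>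
    integral_deriv_eq_sub (fun x _ => (hφ.differentiable (by norm_num)).differentiableAt)
      (hdc.intervalIntegrable a b)
  have hΦφ : ∀ k : ℕ, iteratedDeriv (k+1) Φ xi = iteratedDeriv k φ xi := by
    intro k; rw [iteratedDeriv_succ', hdΦ]
  have hΦ1 : iteratedDeriv 1 Φ xi = φ xi := by simpa using hΦφ 0
  have hΦ3 : iteratedDeriv 3 Φ xi = iteratedDeriv 2 φ xi := by simpa using hΦφ 2
  have hΦ5 : iteratedDeriv 5 Φ xi = iteratedDeriv 4 φ xi := by simpa using hΦφ 4
  set a1 : ℝ := -φ xi with ha1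
  set a3 : ℝ := -(9/40) * iteratedDeriv 2 φ xi with ha3
  set a5 : ℝ := -(3/128) * iteratedDeriv 4 φ xi with ha5
  set A : ℝ → ℝ := fun t => (-(11/60)) * Φ (xi + (-(3/2)) * t) + (-(9/20)) * Φ (xi + (-(1/2)) * t)
      + (9/20) * Φ (xi + (1/2) * t) + (11/60) * Φ (xi + (3/2) * t) with hAdef
  set B : ℝ → ℝ := fun t => (-(1/20)) * φ (xi + (-(3/2)) * t) + (-(9/20)) * φ (xi + (-(1/2)) * t)
      + (-(9/20)) * φ (xi + (1/2) * t) + (-(1/20)) * φ (xi + (3/2) * t) with hBdef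
  set q : ℝ → ℝ := fun t => a1 * t + a3 * t^3 + a5 * t^5 with hqdef
  set P : ℝ → ℝ := fun t => a1 + a3 * t^2 + a5 * t^4 with hPdef
  set F : ℝ → ℝ := fun t => A t + q t with hFdef
  set G : ℝ → ℝ := fun t => B t - P t with hGdef
  -- smoothness
  have haffc : ∀ (n : WithTop ℕ∞) (c : ℝ), ContDiff ℝ n fun t : ℝ => (xi + c * t) := fun n c =>
    contDiff_const.add (contDiff_const.mul contDiff_id)
  have hA7 : ContDiff ℝ 7 A := by
    rw [hAdef]
    exact (((contDiff_const.mul (hΦ7.comp (haffc _ _))).add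
      (contDiff_const.mul (hΦ7.comp (haffc _ _)))).add
      (contDiff_const.mul (hΦ7.comp (haffc _ _)))).add
      (contDiff_const.mul (hΦ7.comp (haffc _ _)))
  have hB6 : ContDiff ℝ 6 B := by
    rw [hBdef]
    exact (((contDiff_const.mul (hφ.comp (haffc _ _))).add
      (contDiff_const.mul (hφ.comp (haffc _ _)))).add
      (contDiff_const.mul (hφ.comp (haffc _ _)))).add
      (contDiff_const.mul (hφ.comp (haffc _ _)))
  have hq7 : ∀ n : WithTop ℕ∞, ContDiff ℝ n q := by
    intro n; rw [hqdef]
    exact ((contDiff_const.mul contDiff_id).add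
      (contDiff_const.mul (contDiff_id.pow 3))).add (contDiff_const.mul (contDiff_id.pow 5))
  have hP7 : ∀ n : WithTop ℕ∞, ContDiff ℝ n P := by
    intro n; rw [hPdef]
    exact (contDiff_const.add (contDiff_const.mul (contDiff_id.pow 2))).add
      (contDiff_const.mul (contDiff_id.pow 4))
  have hF7 : ContDiff ℝ 7 F := by rw [hFdef]; exact hA7.add (hq7 7)
  have hG6 : ContDiff ℝ 6 G := by rw [hGdef]; exact hB6.sub (hP7 6)
  have hΦk : ∀ k : ℕ, k ≤ 7 → ContDiff ℝ k Φ := fun k hk =>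
    hΦ7.of_le (by exact_mod_cast Nat.cast_le.mpr hk)
  have hφk : ∀ k : ℕ, k ≤ 6 → ContDiff ℝ k φ := fun k hk =>
    hφ.of_le (by exact_mod_cast Nat.cast_le.mpr hk)
  have hAk : ∀ k : ℕ, k ≤ 7 → ContDiff ℝ k A := fun k hk =>
    hA7.of_le (by exact_mod_cast Nat.cast_le.mpr hk)
  have hBk : ∀ k : ℕ, k ≤ 6 → ContDiff ℝ k B := fun k hk =>
    hB6.of_le (by exact_mod_cast Nat.cast_le.mpr hk)
  -- q derivative chain
  have dq0 : deriv q = fun t => a1 + 3*a3*t^2 + 5*a5*t^4 := by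
    funext t
    have h := (((hasDerivAt_id t).const_mul a1).add
      ((hasDerivAt_pow 3 t).const_mul a3)).add ((hasDerivAt_pow 5 t).const_mul a5)
    have h2 : HasDerivAt q (a1 + 3*a3*t^2 + 5*a5*t^4) t := by
      rw [hqdef]; refine h.congr_deriv ?_; push_cast; ring
    exact h2.deriv
  have dq1 : deriv (fun t : ℝ => a1 + 3*a3*t^2 + 5*a5*t^4) = fun t => 6*a3*t + 20*a5*t^3 := by
    funext t
    have h := ((hasDerivAt_const t a1).add ((hasDerivAt_pow 2 t).const_mul (3*a3))).add
      ((hasDerivAt_pow 4 t).const_mul (5*a5))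
    have h2 : HasDerivAt (fun t : ℝ => a1 + 3*a3*t^2 + 5*a5*t^4) (6*a3*t + 20*a5*t^3) t := by
      refine h.congr_deriv ?_; push_cast; ring
    exact h2.deriv
  have dq2 : deriv (fun t : ℝ => 6*a3*t + 20*a5*t^3) = fun t => 6*a3 + 60*a5*t^2 := by
    funext t
    have h := ((hasDerivAt_id t).const_mul (6*a3)).add ((hasDerivAt_pow 3 t).const_mul (20*a5))
    have h2 : HasDerivAt (fun t : ℝ => 6*a3*t + 20*a5*t^3) (6*a3 + 60*a5*t^2) t := by
      refine h.congr_deriv ?_; push_cast; ring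
    exact h2.deriv
  have dq3 : deriv (fun t : ℝ => 6*a3 + 60*a5*t^2) = fun t => 120*a5*t := by
    funext t
    have h := (hasDerivAt_const t (6*a3)).add ((hasDerivAt_pow 2 t).const_mul (60*a5))
    have h2 : HasDerivAt (fun t : ℝ => 6*a3 + 60*a5*t^2) (120*a5*t) t := by
      refine h.congr_deriv ?_; push_cast; ring
    exact h2.deriv
  have dq4 : deriv (fun t : ℝ => 120*a5*t) = fun _ => 120*a5 := by
    funext t
    have h := (hasDerivAt_id t).const_mul (120*a5)
    have h2 : HasDerivAt (fun t : ℝ => 120*a5*t) (120*a5) t := by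
      refine h.congr_deriv ?_; ring
    exact h2.deriv
  have dq5 : deriv (fun _ : ℝ => (120:ℝ)*a5) = fun _ => (0:ℝ) := by
    funext t; exact deriv_const t _
  have eq1 : iteratedDeriv 1 q = fun t => a1 + 3*a3*t^2 + 5*a5*t^4 := by
    rw [iteratedDeriv_one, dq0]
  have eq2 : iteratedDeriv 2 q = fun t => 6*a3*t + 20*a5*t^3 := by
    rw [show (2:ℕ) = 1+1 from rfl, iteratedDeriv_succ, eq1, dq1]
  have eq3 : iteratedDeriv 3 q = fun t => 6*a3 + 60*a5*t^2 := by
    rw [show (3:ℕ) = 2+1 from rfl, iteratedDeriv_succ, eq2, dq2]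
  have eq4 : iteratedDeriv 4 q = fun t => 120*a5*t := by
    rw [show (4:ℕ) = 3+1 from rfl, iteratedDeriv_succ, eq3, dq3]
  have eq5 : iteratedDeriv 5 q = fun _ => (120:ℝ)*a5 := by
    rw [show (5:ℕ) = 4+1 from rfl, iteratedDeriv_succ, eq4, dq4]
  have eq6 : iteratedDeriv 6 q = fun _ => (0:ℝ) := by
    rw [show (6:ℕ) = 5+1 from rfl, iteratedDeriv_succ, eq5, dq5]
  -- P derivative chain
  have dp0 : deriv P = fun t => 2*a3*t + 4*a5*t^3 := by
    funext t
    have h := ((hasDerivAt_const t a1).add ((hasDerivAt_pow 2 t).const_mul a3)).add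
      ((hasDerivAt_pow 4 t).const_mul a5)
    have h2 : HasDerivAt P (2*a3*t + 4*a5*t^3) t := by
      rw [hPdef]; refine h.congr_deriv ?_; push_cast; ring
    exact h2.deriv
  have dp1 : deriv (fun t : ℝ => 2*a3*t + 4*a5*t^3) = fun t => 2*a3 + 12*a5*t^2 := by
    funext t
    have h := ((hasDerivAt_id t).const_mul (2*a3)).add ((hasDerivAt_pow 3 t).const_mul (4*a5))
    have h2 : HasDerivAt (fun t : ℝ => 2*a3*t + 4*a5*t^3) (2*a3 + 12*a5*t^2) t := by
      refine h.congr_deriv ?_; push_cast; ring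
    exact h2.deriv
  have dp2 : deriv (fun t : ℝ => 2*a3 + 12*a5*t^2) = fun t => 24*a5*t := by
    funext t
    have h := (hasDerivAt_const t (2*a3)).add ((hasDerivAt_pow 2 t).const_mul (12*a5))
    have h2 : HasDerivAt (fun t : ℝ => 2*a3 + 12*a5*t^2) (24*a5*t) t := by
      refine h.congr_deriv ?_; push_cast; ring
    exact h2.deriv
  have dp3 : deriv (fun t : ℝ => 24*a5*t) = fun _ => (24:ℝ)*a5 := by
    funext t
    have h := (hasDerivAt_id t).const_mul (24*a5)
    have h2 : HasDerivAt (fun t : ℝ => 24*a5*t) (24*a5) t := by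
      refine h.congr_deriv ?_; ring
    exact h2.deriv
  have dp4 : deriv (fun _ : ℝ => (24:ℝ)*a5) = fun _ => (0:ℝ) := by
    funext t; exact deriv_const t _
  have ep1 : iteratedDeriv 1 P = fun t => 2*a3*t + 4*a5*t^3 := by
    rw [iteratedDeriv_one, dp0]
  have ep2 : iteratedDeriv 2 P = fun t => 2*a3 + 12*a5*t^2 := by
    rw [show (2:ℕ) = 1+1 from rfl, iteratedDeriv_succ, ep1, dp1]
  have ep3 : iteratedDeriv 3 P = fun t => 24*a5*t := by
    rw [show (3:ℕ) = 2+1 from rfl, iteratedDeriv_succ, ep2, dp2]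
  have ep4 : iteratedDeriv 4 P = fun _ => (24:ℝ)*a5 := by
    rw [show (4:ℕ) = 3+1 from rfl, iteratedDeriv_succ, ep3, dp3]
  have ep5 : iteratedDeriv 5 P = fun _ => (0:ℝ) := by
    rw [show (5:ℕ) = 4+1 from rfl, iteratedDeriv_succ, ep4, dp4]
  -- iterated derivatives of A and B at 0
  have hAit : ∀ k : ℕ, k ≤ 7 →
      iteratedDeriv k A 0 = ((-(11/60)) * (-(3/2):ℝ)^k + (-(9/20)) * (-(1/2):ℝ)^k
        + (9/20) * ((1/2):ℝ)^k + (11/60) * ((3/2):ℝ)^k) * iteratedDeriv k Φ xi := by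
    intro k hk
    rw [hAdef]
    exact stmt17_combo (hΦk k hk) xi _ _ _ _ _ _ _ _
  have hBit : ∀ k : ℕ, k ≤ 6 →
      iteratedDeriv k B 0 = ((-(1/20)) * (-(3/2):ℝ)^k + (-(9/20)) * (-(1/2):ℝ)^k
        + (-(9/20)) * ((1/2):ℝ)^k + (-(1/20)) * ((3/2):ℝ)^k) * iteratedDeriv k φ xi := by
    intro k hk
    rw [hBdef]
    exact stmt17_combo (hφk k hk) xi _ _ _ _ _ _ _ _
  -- vanishing of derivatives of F up to 6
  have hFz : ∀ k ≤ 6, iteratedDeriv k F 0 = 0 := by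
    intro k hk
    rw [hFdef, stmt17_itadd (hAk k (by omega)) (hq7 k) 0, hAit k (by omega)]
    interval_cases k
    · simp only [iteratedDeriv_zero, hqdef]; norm_num
    · rw [hΦ1, eq1]; simp only [ha1]; norm_num
    · rw [eq2]; norm_num
    · rw [hΦ3, eq3]; simp only [ha3]; norm_num; ring
    · rw [eq4]; norm_num
    · rw [hΦ5, eq5]; simp only [ha5]; norm_num; ring
    · rw [eq6]; norm_num
  have hGz : ∀ k ≤ 5, iteratedDeriv k G 0 = 0 := by
    intro k hk
    rw [hGdef, stmt17_itsub (hBk k (by omega)) (hP7 k) 0, hBit k (by omega)]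
    interval_cases k
    · simp only [iteratedDeriv_zero, hPdef]; simp only [ha1]; norm_num
    · rw [ep1]; norm_num
    · rw [ep2]; simp only [ha3]; norm_num; ring
    · rw [ep3]; norm_num
    · rw [ep4]; simp only [ha5]; norm_num; ring
    · rw [ep5]; norm_num
  -- big-O facts
  have hFO : F =O[𝓝 (0:ℝ)] fun t => t ^ 7 := by
    have h7 : ContDiff ℝ ((6:ℕ)+1) F := by exact_mod_cast hF7
    simpa using stmt17_bigO 6 F h7 hFz
  have hGO : G =O[𝓝 (0:ℝ)] fun t => t ^ 6 := by
    have h6 : ContDiff ℝ ((5:ℕ)+1) G := by exact_mod_cast hG6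
    simpa using stmt17_bigO 5 G h6 hGz
  have htG : (fun t => t * G t) =O[𝓝 (0:ℝ)] fun t => t ^ 7 := by
    have h := (isBigO_refl (fun t : ℝ => t) (𝓝 (0:ℝ))).mul hGO
    have h2 : (fun t : ℝ => t * t^6) = fun t : ℝ => t^7 := by funext t; ring
    rwa [h2] at h
  have hgO : (fun t => F t + t * G t) =O[𝓝[>] (0:ℝ)] fun t => t ^ 7 :=
    (hFO.add htG).mono nhdsWithin_le_nhds
  have h1t : (fun t => (1/t) * (F t + t * G t)) =O[𝓝[>] (0:ℝ)] fun t => (1/t) * t^7 :=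
    (isBigO_refl (fun t : ℝ => 1/t) _).mul hgO
  have heqR : (fun t : ℝ => (1/t) * t^7) =ᶠ[𝓝[>] (0:ℝ)] fun t => t^6 := by
    filter_upwards [self_mem_nhdsWithin] with t ht
    have htne : t ≠ 0 := ne_of_gt ht
    field_simp
  have heqL : (fun t => (1/t) * (F t + t * G t)) =ᶠ[𝓝[>] (0:ℝ)]
      (fun Δx : ℝ =>
        (11 / 60) * ((1 / Δx) * ∫ x in ((xi - Δx) - Δx / 2)..((xi - Δx) + Δx / 2), φ x)
          + (19 / 30) * ((1 / Δx) * ∫ x in (xi - Δx / 2)..(xi + Δx / 2), φ x)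
          + (11 / 60) * ((1 / Δx) * ∫ x in ((xi + Δx) - Δx / 2)..((xi + Δx) + Δx / 2), φ x)
          + (Δx / 20) *
            (((1 / Δx) * ∫ x in ((xi - Δx) - Δx / 2)..((xi - Δx) + Δx / 2), deriv φ x)
              + 10 * ((1 / Δx) * ∫ x in (xi - Δx / 2)..(xi + Δx / 2), deriv φ x)
              - ((1 / Δx) * ∫ x in ((xi + Δx) - Δx / 2)..((xi + Δx) + Δx / 2), deriv φ x))
          - φ (xi + Δx / 2)) := by
    filter_upwards [self_mem_nhdsWithin] with t ht
    have htne : t ≠ 0 := ne_of_gt ht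
    simp only [hFdef, hGdef, hAdef, hBdef, hqdef, hPdef]
    rw [hint, hint, hint, hintd, hintd, hintd]
    rw [show (xi - t) - t/2 = xi + (-(3/2))*t by ring,
      show (xi - t) + t/2 = xi + (-(1/2))*t by ring,
      show (xi + t) - t/2 = xi + (1/2)*t by ring,
      show (xi + t) + t/2 = xi + (3/2)*t by ring,
      show xi - t/2 = xi + (-(1/2))*t by ring,
      show xi + t/2 = xi + (1/2)*t by ring]
    field_simp
    ring
  exact h1t.congr' heqL heqR
end
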